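/- Let A be the matrix indexed by oriented k-faces (one per underlying face, for a fixed orientation O) of a finite simplicial complex restricted to a down-connected component C_k of k-faces (k ≥ 1) with at least two faces, defined by A(σ,σ') = −(1/(k+1))·s^down(σ,σ')·LP(σ)^{1/2}LP(σ')^{1/2}/LP(σ∩σ') for down-adjacent σ, σ' and A(σ,σ) = −(1/(k+1))·LP(σ)·Σ_{ρ⊂σ}LP(ρ)^{−1}, extended by 0 otherwise. Then λ_min(A) ≥ −1, with equality if and only if C_k admits a coherent orientation; in that case the eigenvalue −1 has multiplicity one with eigenvector g(σ) = (LP(σ)·RP(σ))^{1/2} (in the coherent orientation). -/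

import Mathlib

open Matrix

/-- The incidence sign `[σ : ρ]` for a codimension-1 subface `ρ ⊂ σ` of a
canonically (increasingly) ordered face. -/
def IncSgn {α : Type*} [LinearOrder α] (σ ρ : Finset α) : ℤ :=
  (-1) ^ (∑ x ∈ σ \ ρ, (σ.filter (· < x)).card)

/-- A set `S` of `k`-faces is down-connected if any two of its members are
joined by a chain of faces in `S` with consecutive faces intersecting in
`(k-1)`-faces. -/
def DownConnected {α : Type*} [DecidableEq α] (k : ℕ) (S : Finset (Finset α)) : Prop :=
  ∀ σ ∈ S, ∀ σ' ∈ S,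
    Relation.ReflTransGen (fun a b => a ∈ S ∧ b ∈ S ∧ a ≠ b ∧ (a ∩ b).card = k) σ σ'

/-!
The matrix is `A = -(k+1)⁻¹ ∑_ρ P_ρ`, the sum running over the `(k-1)`-faces `ρ` of `C` and `P_ρ`
being the orthogonal projection onto the vector `v_ρ(σ) = [σ : ρ] √LP(σ)` supported on the cofaces
of `ρ`: off the diagonal this is the definition, and on the diagonal it uses
`‖v_ρ‖² = ∑_{σ ⊃ ρ} LP(σ) = LP(ρ)`, which holds because maximality of `C` puts every coface of `ρ`
into `C`. Since every `k`-face has exactly `k + 1` facets,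
`‖x‖² + ⟪x, A x⟫ = (k+1)⁻¹ ∑_ρ ‖x|_ρ - P_ρ x‖²` with `x|_ρ` the restriction of `x` to the cofaces
of `ρ` (Cauchy–Schwarz with its defect written out). Hence `A + 1 ⪰ 0`, and `A x = -x` iff on the
cofaces of every `ρ` the vector `x` is a multiple of `v_ρ`. Along a down-path these multiples
propagate, so such an `x` vanishes nowhere unless it vanishes identically (multiplicity one), and
its signs, corrected by the orientation, give a coherent orientation; conversely a coherent
orientation `ε` makes `σ ↦ ε(σ) √LP(σ)` locally proportional to every `v_ρ`.
-/

open Finset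
open scoped FinsetFamily

theorem Finset.sum_sub_div_mul_sq {ι : Type*} (s : Finset ι) (a c : ι → ℝ) :
    ∑ i ∈ s, (c i - (∑ j ∈ s, a j * c j) / (∑ j ∈ s, a j ^ 2) * a i) ^ 2 =
      ∑ i ∈ s, c i ^ 2 - (∑ i ∈ s, a i * c i) ^ 2 / ∑ i ∈ s, a i ^ 2 := by
  set P := ∑ j ∈ s, a j * c j
  set W := ∑ j ∈ s, a j ^ 2
  have hexp : ∑ i ∈ s, (c i - P / W * a i) ^ 2 =
      ∑ i ∈ s, c i ^ 2 - 2 * (P / W) * P + (P / W) ^ 2 * W := by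
    simp only [sub_sq, sum_add_distrib, sum_sub_distrib, mul_pow, ← mul_sum, P, W]
    congr 2
    rw [mul_sum]
    exact sum_congr rfl fun i _ => by ring
  rcases eq_or_ne W 0 with hW | hW
  · simp [hW]
  · rw [hexp]
    field_simp
    ring

section ProjectionSum

variable {ι β : Type*}

def IsLocallyProportional (R : Finset β) (v : β → ι → ℝ) (x : ι → ℝ) : Prop :=
  ∀ ρ ∈ R, ∃ t : ℝ, ∀ σ, v ρ σ ≠ 0 → x σ = t * v ρ σ

theorem IsLocallyProportional.eq_zero_of_apply_eq_zero {R : Finset β} {v : β → ι → ℝ}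
    {x : ι → ℝ} (hx : IsLocallyProportional R v x)
    (hconn : ∀ σ σ', Relation.ReflTransGen (fun a b => ∃ ρ ∈ R, v ρ a ≠ 0 ∧ v ρ b ≠ 0) σ σ')
    {σ₀ : ι} (h₀ : x σ₀ = 0) : x = 0 := by
  funext σ
  induction hconn σ₀ σ with
  | refl => exact h₀
  | tail _ hab ih =>
    obtain ⟨ρ, hρ, ha, hb⟩ := hab
    obtain ⟨t, ht⟩ := hx ρ hρ
    rw [ht _ ha] at ih
    rw [ht _ hb, (mul_eq_zero.1 ih).resolve_right ha, zero_mul, Pi.zero_apply]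

variable [Fintype ι]

/-- The sum of the orthogonal projections onto the lines `ℝ ∙ v ρ`; a summand with `v ρ = 0` is
`0` because `0⁻¹ = 0`. -/
noncomputable def projSum (R : Finset β) (v : β → ι → ℝ) : Matrix ι ι ℝ :=
  ∑ ρ ∈ R, (v ρ ⬝ᵥ v ρ)⁻¹ • vecMulVec (v ρ) (v ρ)

variable (R : Finset β) (v : β → ι → ℝ)

theorem projSum_apply (σ σ' : ι) :
    projSum R v σ σ' = ∑ ρ ∈ R, v ρ σ * v ρ σ' / (v ρ ⬝ᵥ v ρ) := by
  simp [projSum, Matrix.sum_apply, vecMulVec_apply, div_eq_inv_mul]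

theorem isHermitian_projSum : (projSum R v).IsHermitian := by
  ext σ σ'
  simp [projSum_apply, mul_comm]

theorem dotProduct_projSum_mulVec (x : ι → ℝ) :
    x ⬝ᵥ projSum R v *ᵥ x = ∑ ρ ∈ R, (v ρ ⬝ᵥ x) ^ 2 / (v ρ ⬝ᵥ v ρ) := by
  simp only [projSum, Matrix.sum_mulVec, smul_mulVec, vecMulVec_mulVec, dotProduct_sum,
    dotProduct_smul, smul_eq_mul, op_smul_eq_mul, dotProduct_comm x (v _)]
  exact sum_congr rfl fun ρ _ => by ring

theorem sum_sum_filter_ne_zero_sq {m : ℕ} (hdeg : ∀ σ, #{ρ ∈ R | v ρ σ ≠ 0} = m) (x : ι → ℝ) :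
    ∑ ρ ∈ R, ∑ σ with v ρ σ ≠ 0, x σ ^ 2 = m * (x ⬝ᵥ x) := by
  simp_rw [sum_filter, dotProduct, mul_sum]
  rw [sum_comm]
  refine sum_congr rfl fun σ _ => ?_
  rw [← sum_filter, sum_const, hdeg, nsmul_eq_mul, sq]

variable [DecidableEq ι] {A : Matrix ι ι ℝ} {m : ℕ}

theorem dotProduct_add_one_mulVec_eq_sum_sq (hA : A = -(m : ℝ)⁻¹ • projSum R v) (hm : m ≠ 0)
    (hdeg : ∀ σ, #{ρ ∈ R | v ρ σ ≠ 0} = m) (x : ι → ℝ) :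
    x ⬝ᵥ (A + 1) *ᵥ x = (m : ℝ)⁻¹ *
      ∑ ρ ∈ R, ∑ σ with v ρ σ ≠ 0, (x σ - (v ρ ⬝ᵥ x) / (v ρ ⬝ᵥ v ρ) * v ρ σ) ^ 2 := by
  have hsupp : ∀ (ρ : β) (y : ι → ℝ), ∑ σ with v ρ σ ≠ 0, v ρ σ * y σ = v ρ ⬝ᵥ y := fun ρ y =>
    sum_filter_of_ne fun σ _ h => left_ne_zero_of_mul h
  have hρ : ∀ ρ, ∑ σ with v ρ σ ≠ 0, (x σ - (v ρ ⬝ᵥ x) / (v ρ ⬝ᵥ v ρ) * v ρ σ) ^ 2 =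
      ∑ σ with v ρ σ ≠ 0, x σ ^ 2 - (v ρ ⬝ᵥ x) ^ 2 / (v ρ ⬝ᵥ v ρ) := fun ρ => by
    have hsq : ∑ σ with v ρ σ ≠ 0, v ρ σ ^ 2 = v ρ ⬝ᵥ v ρ := by
      simpa only [sq] using hsupp ρ (v ρ)
    simpa only [hsupp, hsq] using sum_sub_div_mul_sq {σ | v ρ σ ≠ 0} (v ρ) x
  simp only [hρ, sum_sub_distrib, sum_sum_filter_ne_zero_sq R v hdeg, hA, add_mulVec,
    Matrix.one_mulVec, smul_mulVec, dotProduct_add, dotProduct_smul, dotProduct_projSum_mulVec,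
    smul_eq_mul]
  field_simp
  ring

theorem posSemidef_add_one_of_eq_projSum (hA : A = -(m : ℝ)⁻¹ • projSum R v) (hm : m ≠ 0)
    (hdeg : ∀ σ, #{ρ ∈ R | v ρ σ ≠ 0} = m) : (A + 1).PosSemidef := by
  refine PosSemidef.of_dotProduct_mulVec_nonneg ?_ fun x => ?_
  · rw [hA]
    exact ((isHermitian_projSum R v).smul (IsSelfAdjoint.all _)).add isHermitian_one
  · rw [star_trivial, dotProduct_add_one_mulVec_eq_sum_sq R v hA hm hdeg]
    positivity

theorem mulVec_eq_neg_iff_of_eq_projSum (hA : A = -(m : ℝ)⁻¹ • projSum R v) (hm : m ≠ 0)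
    (hdeg : ∀ σ, #{ρ ∈ R | v ρ σ ≠ 0} = m) (x : ι → ℝ) :
    A *ᵥ x = -x ↔ IsLocallyProportional R v x := by
  have hpsd := posSemidef_add_one_of_eq_projSum R v hA hm hdeg
  -- `A + 1 ⪰ 0`, so `(A + 1) x = 0` iff its quadratic form, a sum of squares, vanishes.
  rw [← add_eq_zero_iff_eq_neg, show A *ᵥ x + x = (A + 1) *ᵥ x by simp [add_mulVec],
    ← hpsd.dotProduct_mulVec_zero_iff, star_trivial,
    dotProduct_add_one_mulVec_eq_sum_sq R v hA hm hdeg,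
    mul_eq_zero, or_iff_right (by positivity),
    sum_eq_zero_iff_of_nonneg fun _ _ => sum_nonneg fun _ _ => sq_nonneg _]
  refine forall₂_congr fun ρ _ => ?_
  simp only [sum_eq_zero_iff_of_nonneg fun _ _ => sq_nonneg _, mem_filter, mem_univ, true_and,
    pow_eq_zero_iff two_ne_zero, sub_eq_zero]
  refine ⟨fun h => ⟨_, h⟩, fun ⟨t, ht⟩ σ hσ => ?_⟩
  have hvx : v ρ ⬝ᵥ x = t * (v ρ ⬝ᵥ v ρ) := by
    simp only [dotProduct, mul_sum]
    refine sum_congr rfl fun τ _ => ?_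
    by_cases hτ : v ρ τ = 0
    · simp [hτ]
    · rw [ht τ hτ]
      ring
  have hvv : v ρ ⬝ᵥ v ρ ≠ 0 := dotProduct_self_eq_zero.not.2 fun h => hσ (congrFun h σ)
  rw [hvx, mul_div_cancel_right₀ _ hvv, ht σ hσ]

theorem exists_eq_smul_of_mulVec_eq_neg (hA : A = -(m : ℝ)⁻¹ • projSum R v) (hm : m ≠ 0)
    (hdeg : ∀ σ, #{ρ ∈ R | v ρ σ ≠ 0} = m)
    (hconn : ∀ σ σ', Relation.ReflTransGen (fun a b => ∃ ρ ∈ R, v ρ a ≠ 0 ∧ v ρ b ≠ 0) σ σ')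
    {f f' : ι → ℝ} (hf : A *ᵥ f = -f) (hf' : A *ᵥ f' = -f') (hf'0 : f' ≠ 0) :
    ∃ c : ℝ, f = c • f' := by
  obtain ⟨σ, hσ⟩ := Function.ne_iff.1 hf'0
  refine ⟨f σ / f' σ, sub_eq_zero.1 ?_⟩
  refine ((mulVec_eq_neg_iff_of_eq_projSum R v hA hm hdeg _).1 ?_).eq_zero_of_apply_eq_zero
    hconn (σ₀ := σ) ?_
  · rw [mulVec_sub, mulVec_smul, hf, hf']
    module
  · simp [div_mul_cancel₀ _ hσ]

end ProjectionSum

section DownAdjacency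

variable {α : Type*} [DecidableEq α] {k : ℕ}

theorem Finset.card_inter_lt_of_ne {s t : Finset α} (hst : s ≠ t) (hcard : #s = #t) :
    #(s ∩ t) < #s :=
  card_lt_card <| inter_subset_left.ssubset_of_ne fun h =>
    hst <| eq_of_subset_of_card_le (inter_eq_left.1 h) hcard.ge

theorem Finset.inter_eq_of_subset_of_card_eq {s t u : Finset α} (hst : s ≠ t) (hs : #s = k + 1)
    (ht : #t = k + 1) (hus : u ⊆ s) (hut : u ⊆ t) (hu : #u = k) : s ∩ t = u :=
  (eq_of_subset_of_card_le (subset_inter hus hut)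
    (by have := card_inter_lt_of_ne hst (hs.trans ht.symm); omega)).symm

variable {C : Finset (Finset α)}

theorem inter_mem_shadow (hC : (C : Set (Finset α)).Sized (k + 1)) {σ σ' : Finset α}
    (hσ : σ ∈ C) (hcard : #(σ ∩ σ') = k) : σ ∩ σ' ∈ ∂ C :=
  mem_shadow_iff_exists_mem_card_add_one.2 ⟨σ, hσ, inter_subset_left, by rw [hC hσ, hcard]⟩

theorem filter_shadow_subset_eq_powersetCard (hC : (C : Set (Finset α)).Sized (k + 1))
    {σ : Finset α} (hσ : σ ∈ C) : {ρ ∈ ∂ C | ρ ⊆ σ} = σ.powersetCard k := by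
  ext ρ
  simp only [mem_filter, mem_powersetCard]
  refine ⟨fun ⟨hρ, hρσ⟩ => ⟨hρσ, hC.shadow hρ⟩, fun ⟨hρσ, hρ⟩ => ⟨?_, hρσ⟩⟩
  exact mem_shadow_iff_exists_mem_card_add_one.2 ⟨σ, hσ, hρσ, by rw [hC hσ, hρ]⟩

theorem DownConnected.insert_of_card_inter {σ τ : Finset α} (hconn : DownConnected k C)
    (hσ : σ ∈ C) (hτσ : τ ≠ σ) (hcard : #(τ ∩ σ) = k) : DownConnected k (insert τ C) := by
  have lift : ∀ {a b}, Relation.ReflTransGen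
      (fun a b => a ∈ C ∧ b ∈ C ∧ a ≠ b ∧ #(a ∩ b) = k) a b → Relation.ReflTransGen
      (fun a b => a ∈ insert τ C ∧ b ∈ insert τ C ∧ a ≠ b ∧ #(a ∩ b) = k) a b :=
    Relation.ReflTransGen.mono
      (fun _ _ ⟨ha, hb, h⟩ => ⟨mem_insert_of_mem ha, mem_insert_of_mem hb, h⟩) _ _
  have to_σ := Relation.ReflTransGen.single
    (r := fun a b => a ∈ insert τ C ∧ b ∈ insert τ C ∧ a ≠ b ∧ #(a ∩ b) = k)
    ⟨mem_insert_self τ C, mem_insert_of_mem hσ, hτσ, hcard⟩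
  have of_σ := Relation.ReflTransGen.single
    (r := fun a b => a ∈ insert τ C ∧ b ∈ insert τ C ∧ a ≠ b ∧ #(a ∩ b) = k)
    ⟨mem_insert_of_mem hσ, mem_insert_self τ C, hτσ.symm, by rwa [inter_comm]⟩
  intro a ha b hb
  rcases mem_insert.1 ha with rfl | haC <;> rcases mem_insert.1 hb with rfl | hbC
  · exact .refl
  · exact to_σ.trans (lift (hconn σ hσ b hbC))
  · exact (lift (hconn a haC σ hσ)).trans of_σ
  · exact lift (hconn a haC b hbC)

theorem DownConnected.mem_of_card_inter {K : Finset (Finset α)} (hconn : DownConnected k C)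
    (hCK : ∀ σ ∈ C, σ ∈ K ∧ #σ = k + 1)
    (hmax : ∀ T : Finset (Finset α), C ⊆ T →
      (∀ σ ∈ T, σ ∈ K ∧ #σ = k + 1) → DownConnected k T → T = C)
    {σ τ : Finset α} (hσ : σ ∈ C) (hτ : τ ∈ K) (hτcard : #τ = k + 1) (hτσ : τ ≠ σ)
    (hcard : #(τ ∩ σ) = k) : τ ∈ C := by
  have hT : ∀ ν ∈ insert τ C, ν ∈ K ∧ #ν = k + 1 := by
    simpa [hτ, hτcard] using hCK
  rw [← hmax _ (subset_insert τ C) hT (hconn.insert_of_card_inter hσ hτσ hcard)]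
  exact mem_insert_self τ C

theorem DownConnected.reflTransGen_subtype (hconn : DownConnected k C) (a b : {σ // σ ∈ C}) :
    Relation.ReflTransGen (fun x y : {σ // σ ∈ C} => #(x.1 ∩ y.1) = k) a b := by
  suffices ∀ c, Relation.ReflTransGen (fun a b => a ∈ C ∧ b ∈ C ∧ a ≠ b ∧ #(a ∩ b) = k) a.1 c →
      ∀ hc : c ∈ C,
        Relation.ReflTransGen (fun x y : {σ // σ ∈ C} => #(x.1 ∩ y.1) = k) a ⟨c, hc⟩ from
    this b.1 (hconn a.1 a.2 b.1 b.2) b.2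
  intro c h
  induction h with
  | refl => exact fun _ => .refl
  | tail _ hcd ih => exact fun _ => (ih hcd.1).tail hcd.2.2.2

end DownAdjacency

section LeafPath

variable {α : Type*} [DecidableEq α] {K : Finset (Finset α)} {LP : Finset α → ℕ}

theorem leafPath_pos (hKdc : ∀ σ ∈ K, ∀ τ, τ ⊆ σ → τ.Nonempty → τ ∈ K)
    (hLPfacet : ∀ σ ∈ K, (∀ τ ∈ K, σ ⊆ τ → σ = τ) → LP σ = 1)
    (hLPrec : ∀ σ ∈ K, ¬ (∀ τ ∈ K, σ ⊆ τ → σ = τ) →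
      LP σ = ∑ τ ∈ K.filter (fun τ => σ ⊆ τ ∧ τ.card = σ.card + 1), LP τ)
    {σ : Finset α} (hσ : σ ∈ K) : 0 < LP σ := by
  refine strongDownwardInduction (n := K.sup card) (p := fun σ => σ ∈ K → 0 < LP σ)
    (fun σ ih _ hσ => ?_) σ (le_sup hσ) hσ
  by_cases hfacet : ∀ τ ∈ K, σ ⊆ τ → σ = τ
  · rw [hLPfacet σ hσ hfacet]
    exact one_pos
  rw [hLPrec σ hσ hfacet]
  push Not at hfacet
  obtain ⟨τ, hτ, hστ, hne⟩ := hfacet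
  obtain ⟨ν, hσν, hντ, hν⟩ := exists_subsuperset_card_eq hστ (Nat.le_succ #σ)
    (card_lt_card (hστ.ssubset_of_ne hne))
  have hνK : ν ∈ K := hKdc τ hτ ν hντ (card_pos.1 (by omega))
  have hσν' : σ ⊂ ν := hσν.ssubset_of_ne fun h => by rw [h] at hν; omega
  exact sum_pos' (fun _ _ => Nat.zero_le _)
    ⟨ν, mem_filter.2 ⟨hνK, hσν, hν⟩, ih (le_sup hνK) hσν' hνK⟩

theorem leafPath_eq_sum_of_mem_shadow {C : Finset (Finset α)} {k : ℕ}
    (hKdc : ∀ σ ∈ K, ∀ τ, τ ⊆ σ → τ.Nonempty → τ ∈ K) (hk : 1 ≤ k)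
    (hLPrec : ∀ σ ∈ K, ¬ (∀ τ ∈ K, σ ⊆ τ → σ = τ) →
      LP σ = ∑ τ ∈ K.filter (fun τ => σ ⊆ τ ∧ τ.card = σ.card + 1), LP τ)
    (hCK : ∀ σ ∈ C, σ ∈ K ∧ #σ = k + 1)
    (hclosed : ∀ σ ∈ C, ∀ τ ∈ K, #τ = k + 1 → τ ≠ σ → #(τ ∩ σ) = k → τ ∈ C)
    {ρ : Finset α} (hρ : ρ ∈ ∂ C) : LP ρ = ∑ σ ∈ C with ρ ⊆ σ, LP σ := by
  obtain ⟨σ, hσ, hρσ, hcard⟩ := mem_shadow_iff_exists_mem_card_add_one.1 hρ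
  obtain ⟨hσK, hσk⟩ := hCK σ hσ
  have hρk : #ρ = k := by omega
  have hρK : ρ ∈ K := hKdc σ hσK ρ hρσ (card_pos.1 (by omega))
  rw [hLPrec ρ hρK fun h => by have := h σ hσK hρσ; subst this; omega]
  refine sum_congr (ext fun τ => ?_) fun _ _ => rfl
  simp only [mem_filter]
  refine ⟨fun ⟨hτ, hρτ, hτk⟩ => ⟨?_, hρτ⟩, fun ⟨hτ, hρτ⟩ => ⟨(hCK τ hτ).1, hρτ, ?_⟩⟩
  · by_cases hτσ : τ = σ
    · exact hτσ ▸ hσ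
    exact hclosed σ hσ τ hτ (by omega) hτσ
      (by rw [inter_eq_of_subset_of_card_eq hτσ (by omega) hσk hρτ hρσ hρk, hρk])
  · rw [(hCK τ hτ).2, hρk]

end LeafPath

section WeightedIncidence

variable {α : Type*} [LinearOrder α]

theorem incSgn_mul_self (σ ρ : Finset α) : IncSgn σ ρ * IncSgn σ ρ = 1 := by
  simp [IncSgn, ← mul_pow]

theorem coe_sign_eq_self_of_mul_self_eq_one {u : ℤ} (hu : u * u = 1) :
    (SignType.sign u : ℤ) = u := by
  rcases Int.eq_one_or_neg_one_of_mul_eq_one hu with rfl | rfl <;> rfl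

def IsCoherent (k : ℕ) (C : Finset (Finset α)) (ε : Finset α → ℤ) : Prop :=
  ∀ σ ∈ C, ∀ σ' ∈ C, σ ≠ σ' → (σ ∩ σ').card = k →
    ε σ * IncSgn σ (σ ∩ σ') = ε σ' * IncSgn σ' (σ ∩ σ')

noncomputable def weightedIncidence (C : Finset (Finset α)) (LP : Finset α → ℕ)
    (ε0 : Finset α → ℤ) (ρ : Finset α) (σ : {σ // σ ∈ C}) : ℝ :=
  if ρ ⊆ σ.1 then ((ε0 σ.1 * IncSgn σ.1 ρ : ℤ) : ℝ) * √(LP σ.1 : ℝ) else 0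

variable {C : Finset (Finset α)} {LP : Finset α → ℕ} {ε0 : Finset α → ℤ} {k : ℕ}

theorem subset_of_weightedIncidence_ne_zero {ρ : Finset α} {σ : {σ // σ ∈ C}}
    (h : weightedIncidence C LP ε0 ρ σ ≠ 0) : ρ ⊆ σ.1 := by
  by_contra hρσ
  exact h (if_neg hρσ)

theorem weightedIncidence_ne_zero {ρ : Finset α} {σ : {σ // σ ∈ C}}
    (hε : ε0 σ.1 = 1 ∨ ε0 σ.1 = -1) (hLP : 0 < LP σ.1) (hρσ : ρ ⊆ σ.1) :
    weightedIncidence C LP ε0 ρ σ ≠ 0 := by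
  have hε' : ε0 σ.1 ≠ 0 := by rcases hε with h | h <;> simp [h]
  have hInc : IncSgn σ.1 ρ ≠ 0 := left_ne_zero_of_mul_eq_one (incSgn_mul_self σ.1 ρ)
  rw [weightedIncidence, if_pos hρσ]
  exact mul_ne_zero (by exact_mod_cast mul_ne_zero hε' hInc) (by positivity)

theorem weightedIncidence_mul_self {ρ : Finset α} {σ : {σ // σ ∈ C}}
    (hε : ε0 σ.1 = 1 ∨ ε0 σ.1 = -1) :
    weightedIncidence C LP ε0 ρ σ * weightedIncidence C LP ε0 ρ σ =
      if ρ ⊆ σ.1 then (LP σ.1 : ℝ) else 0 := by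
  have hε' : ((ε0 σ.1 : ℤ) : ℝ) * ε0 σ.1 = 1 := by rcases hε with h | h <;> simp [h]
  have hInc : ((IncSgn σ.1 ρ : ℤ) : ℝ) * IncSgn σ.1 ρ = 1 := by
    exact_mod_cast incSgn_mul_self σ.1 ρ
  unfold weightedIncidence
  split_ifs
  · calc _ = ((ε0 σ.1 : ℝ) * ε0 σ.1) * (IncSgn σ.1 ρ * IncSgn σ.1 ρ) *
          (√(LP σ.1 : ℝ) * √(LP σ.1 : ℝ)) := by push_cast; ring
      _ = LP σ.1 := by rw [hε', hInc, Real.mul_self_sqrt (Nat.cast_nonneg _), one_mul, one_mul]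
  · simp

theorem weightedIncidence_dotProduct_self (hε0 : ∀ σ ∈ C, ε0 σ = 1 ∨ ε0 σ = -1)
    (ρ : Finset α) : weightedIncidence C LP ε0 ρ ⬝ᵥ weightedIncidence C LP ε0 ρ =
      ∑ σ ∈ C with ρ ⊆ σ, (LP σ : ℝ) := by
  simp only [dotProduct, weightedIncidence_mul_self (hε0 _ (Subtype.prop _)), sum_filter]
  exact sum_coe_sort C fun σ => if ρ ⊆ σ then (LP σ : ℝ) else 0

theorem projSum_weightedIncidence_apply (hε0 : ∀ σ ∈ C, ε0 σ = 1 ∨ ε0 σ = -1)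
    (hLPsum : ∀ ρ ∈ ∂ C, LP ρ = ∑ σ ∈ C with ρ ⊆ σ, LP σ) (σ σ' : {σ // σ ∈ C}) :
    projSum (∂ C) (weightedIncidence C LP ε0) σ σ' = ∑ ρ ∈ ∂ C,
      weightedIncidence C LP ε0 ρ σ * weightedIncidence C LP ε0 ρ σ' / LP ρ := by
  rw [projSum_apply]
  refine sum_congr rfl fun ρ hρ => ?_
  rw [weightedIncidence_dotProduct_self hε0, hLPsum ρ hρ, Nat.cast_sum]

theorem eq_neg_smul_projSum_weightedIncidence {K : Finset (Finset α)}
    (hKdc : ∀ σ ∈ K, ∀ τ, τ ⊆ σ → τ.Nonempty → τ ∈ K) (hk : 1 ≤ k)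
    (hCK : ∀ σ ∈ C, σ ∈ K ∧ #σ = k + 1) (hε0 : ∀ σ ∈ C, ε0 σ = 1 ∨ ε0 σ = -1)
    (hLPsum : ∀ ρ ∈ ∂ C, LP ρ = ∑ σ ∈ C with ρ ⊆ σ, LP σ)
    {A : Matrix {σ // σ ∈ C} {σ // σ ∈ C} ℝ}
    (hAdiag : ∀ σ : {σ // σ ∈ C}, A σ σ =
      -(1 / (k + 1 : ℝ)) * (LP σ.1 : ℝ) *
        ∑ ρ ∈ K.filter (fun ρ => ρ ⊆ σ.1 ∧ ρ.card = k), ((LP ρ : ℝ))⁻¹)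
    (hAadj : ∀ σ σ' : {σ // σ ∈ C}, σ.1 ≠ σ'.1 → (σ.1 ∩ σ'.1).card = k →
      A σ σ' = -(1 / (k + 1 : ℝ)) *
        ((ε0 σ.1 * IncSgn σ.1 (σ.1 ∩ σ'.1) * ε0 σ'.1 * IncSgn σ'.1 (σ.1 ∩ σ'.1) : ℤ) : ℝ) *
        Real.sqrt (LP σ.1 : ℝ) * Real.sqrt (LP σ'.1 : ℝ) / (LP (σ.1 ∩ σ'.1) : ℝ))
    (hAzero : ∀ σ σ' : {σ // σ ∈ C}, σ.1 ≠ σ'.1 → (σ.1 ∩ σ'.1).card ≠ k → A σ σ' = 0) :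
    A = -((k + 1 : ℕ) : ℝ)⁻¹ • projSum (∂ C) (weightedIncidence C LP ε0) := by
  have hC : (C : Set (Finset α)).Sized (k + 1) := fun σ hσ => (hCK σ hσ).2
  ext σ σ'
  rw [Matrix.smul_apply, projSum_weightedIncidence_apply hε0 hLPsum, smul_eq_mul, Nat.cast_succ,
    ← one_div]
  rcases eq_or_ne σ σ' with rfl | hne
  · have hfaces : K.filter (fun ρ => ρ ⊆ σ.1 ∧ #ρ = k) = {ρ ∈ ∂ C | ρ ⊆ σ.1} := by
      rw [filter_shadow_subset_eq_powersetCard hC σ.2]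
      ext ρ
      simp only [mem_filter, mem_powersetCard, and_iff_right_iff_imp, and_imp]
      exact fun hρσ hρ => hKdc σ.1 (hCK σ.1 σ.2).1 ρ hρσ (card_pos.1 (by omega))
    rw [hAdiag, hfaces, sum_filter, mul_assoc, mul_sum]
    refine congrArg _ (sum_congr rfl fun ρ _ => ?_)
    rw [weightedIncidence_mul_self (hε0 σ.1 σ.2)]
    split_ifs <;> simp [div_eq_mul_inv]
  have hne' : σ.1 ≠ σ'.1 := Subtype.coe_ne_coe.2 hne
  have hsupp : ∀ ρ ∈ ∂ C,
      weightedIncidence C LP ε0 ρ σ * weightedIncidence C LP ε0 ρ σ' / LP ρ ≠ 0 →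
        σ.1 ∩ σ'.1 = ρ := fun ρ hρ h => by
    simp only [div_ne_zero_iff, mul_ne_zero_iff] at h
    exact inter_eq_of_subset_of_card_eq hne' (hC σ.2) (hC σ'.2)
      (subset_of_weightedIncidence_ne_zero h.1.1) (subset_of_weightedIncidence_ne_zero h.1.2)
      (hC.shadow hρ)
  by_cases hcard : #(σ.1 ∩ σ'.1) = k
  · rw [hAadj σ σ' hne' hcard,
      sum_eq_single_of_mem _ (inter_mem_shadow hC σ.2 hcard) fun ρ hρ hρne => ?_]
    · simp only [weightedIncidence, if_pos inter_subset_left, if_pos inter_subset_right]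
      push_cast
      ring
    · by_contra h
      exact hρne (hsupp ρ hρ h).symm
  · rw [hAzero σ σ' hne' hcard, eq_comm, mul_eq_zero_of_right]
    refine sum_eq_zero fun ρ hρ => ?_
    by_contra h
    exact hcard (hsupp ρ hρ h ▸ hC.shadow hρ)

theorem card_filter_weightedIncidence_ne_zero (hC : (C : Set (Finset α)).Sized (k + 1))
    (hε0 : ∀ σ ∈ C, ε0 σ = 1 ∨ ε0 σ = -1) (hLP : ∀ σ ∈ C, 0 < LP σ) (σ : {σ // σ ∈ C}) :
    #{ρ ∈ ∂ C | weightedIncidence C LP ε0 ρ σ ≠ 0} = k + 1 := by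
  rw [filter_congr fun ρ _ => ⟨subset_of_weightedIncidence_ne_zero,
      weightedIncidence_ne_zero (hε0 σ.1 σ.2) (hLP σ.1 σ.2)⟩,
    filter_shadow_subset_eq_powersetCard hC σ.2, card_powersetCard, hC σ.2,
    Nat.choose_succ_self_right]

theorem reflTransGen_weightedIncidence (hC : (C : Set (Finset α)).Sized (k + 1))
    (hconn : DownConnected k C) (hε0 : ∀ σ ∈ C, ε0 σ = 1 ∨ ε0 σ = -1) (hLP : ∀ σ ∈ C, 0 < LP σ)
    (σ σ' : {σ // σ ∈ C}) :
    Relation.ReflTransGen (fun a b => ∃ ρ ∈ ∂ C,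
      weightedIncidence C LP ε0 ρ a ≠ 0 ∧ weightedIncidence C LP ε0 ρ b ≠ 0) σ σ' :=
  Relation.ReflTransGen.mono (fun a b h => ⟨_, inter_mem_shadow hC a.2 h,
      weightedIncidence_ne_zero (hε0 a.1 a.2) (hLP a.1 a.2) inter_subset_left,
      weightedIncidence_ne_zero (hε0 b.1 b.2) (hLP b.1 b.2) inter_subset_right⟩) σ σ'
    (hconn.reflTransGen_subtype σ σ')

theorem isLocallyProportional_of_isCoherent (hC : (C : Set (Finset α)).Sized (k + 1))
    {ε : Finset α → ℤ} (hε : IsCoherent k C ε) :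
    IsLocallyProportional (∂ C) (weightedIncidence C LP ε0)
      fun σ => ((ε0 σ.1 * ε σ.1 : ℤ) : ℝ) * √(LP σ.1 : ℝ) := by
  intro ρ hρ
  obtain ⟨σ₀, hσ₀, hρσ₀, -⟩ := mem_shadow_iff_exists_mem_card_add_one.1 hρ
  refine ⟨((ε σ₀ * IncSgn σ₀ ρ : ℤ) : ℝ), fun σ hσ => ?_⟩
  have hρσ := subset_of_weightedIncidence_ne_zero hσ
  have hsign : ε σ.1 * IncSgn σ.1 ρ = ε σ₀ * IncSgn σ₀ ρ := by
    rcases eq_or_ne σ.1 σ₀ with h | h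
    · rw [h]
    · have hint := inter_eq_of_subset_of_card_eq h (hC σ.2) (hC hσ₀) hρσ hρσ₀ (hC.shadow hρ)
      simpa [hint] using hε σ.1 σ.2 σ₀ hσ₀ h (hint ▸ hC.shadow hρ)
  have hεε0 : ε0 σ.1 * ε σ.1 = ε σ.1 * IncSgn σ.1 ρ * (ε0 σ.1 * IncSgn σ.1 ρ) := by
    linear_combination (-(ε0 σ.1 * ε σ.1)) * incSgn_mul_self σ.1 ρ
  rw [weightedIncidence, if_pos hρσ, ← hsign]
  dsimp only
  rw [hεε0]
  push_cast
  ring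

theorem mul_sign_mul_incSgn_eq_sign {ρ : Finset α} {σ : {σ // σ ∈ C}}
    (hε : ε0 σ.1 = 1 ∨ ε0 σ.1 = -1) (hLP : 0 < LP σ.1) (hρσ : ρ ⊆ σ.1) {x t : ℝ}
    (hx : x = t * weightedIncidence C LP ε0 ρ σ) :
    ε0 σ.1 * SignType.sign x * IncSgn σ.1 ρ = SignType.sign t := by
  have hu : ε0 σ.1 * IncSgn σ.1 ρ * (ε0 σ.1 * IncSgn σ.1 ρ) = 1 := by
    rcases hε with h | h <;> simp [h, incSgn_mul_self]
  rw [hx, weightedIncidence, if_pos hρσ, ← mul_assoc, sign_mul, sign_mul, sign_intCast,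
    sign_pos (by positivity : 0 < √(LP σ.1 : ℝ)), mul_one, SignType.coe_mul,
    coe_sign_eq_self_of_mul_self_eq_one hu]
  linear_combination (SignType.sign t : ℤ) * hu

theorem exists_isCoherent_of_isLocallyProportional (hC : (C : Set (Finset α)).Sized (k + 1))
    (hε0 : ∀ σ ∈ C, ε0 σ = 1 ∨ ε0 σ = -1) (hLP : ∀ σ ∈ C, 0 < LP σ)
    {f : {σ // σ ∈ C} → ℝ} (hf0 : ∀ σ, f σ ≠ 0)
    (hf : IsLocallyProportional (∂ C) (weightedIncidence C LP ε0) f) :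
    ∃ ε : Finset α → ℤ, (∀ σ ∈ C, ε σ = 1 ∨ ε σ = -1) ∧ IsCoherent k C ε := by
  refine ⟨fun τ => if h : τ ∈ C then ε0 τ * SignType.sign (f ⟨τ, h⟩) else 1,
    fun σ hσ => ?_, fun σ hσ σ' hσ' hne hcard => ?_⟩
  · simp only [dif_pos hσ]
    rcases hε0 σ hσ with h | h <;> rcases (hf0 ⟨σ, hσ⟩).lt_or_gt with hs | hs <;>
      simp [h, hs, sign_neg, sign_pos]
  · obtain ⟨t, ht⟩ := hf _ (inter_mem_shadow hC hσ hcard)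
    have hsign := fun (τ : {σ // σ ∈ C}) (hτ : σ ∩ σ' ⊆ τ.1) =>
      mul_sign_mul_incSgn_eq_sign (hε0 τ.1 τ.2) (hLP τ.1 τ.2) hτ
        (ht τ (weightedIncidence_ne_zero (hε0 τ.1 τ.2) (hLP τ.1 τ.2) hτ))
    simp only [dif_pos hσ, dif_pos hσ']
    rw [hsign ⟨σ, hσ⟩ inter_subset_left, hsign ⟨σ', hσ'⟩ inter_subset_right]

end WeightedIncidence

theorem stmt16_general {α : Type} [LinearOrder α]
    (K : Finset (Finset α))
    (hKdc : ∀ σ ∈ K, ∀ τ, τ ⊆ σ → τ.Nonempty → τ ∈ K)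
    (k : ℕ) (hk : 1 ≤ k)
    (LP : Finset α → ℕ)
    (hLPfacet : ∀ σ ∈ K, (∀ τ ∈ K, σ ⊆ τ → σ = τ) → LP σ = 1)
    (hLPrec : ∀ σ ∈ K, ¬ (∀ τ ∈ K, σ ⊆ τ → σ = τ) →
      LP σ = ∑ τ ∈ K.filter (fun τ => σ ⊆ τ ∧ τ.card = σ.card + 1), LP τ)
    (C : Finset (Finset α))
    (hCK : ∀ σ ∈ C, σ ∈ K ∧ σ.card = k + 1)
    (hCconn : DownConnected k C)
    (hCmax : ∀ T : Finset (Finset α), C ⊆ T →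
      (∀ σ ∈ T, σ ∈ K ∧ σ.card = k + 1) → DownConnected k T → T = C)
    (hCcard : 2 ≤ C.card)
    (ε0 : Finset α → ℤ)
    (hε0 : ∀ σ ∈ K, ε0 σ = 1 ∨ ε0 σ = -1)
    (A : Matrix {σ // σ ∈ C} {σ // σ ∈ C} ℝ)
    (hAdiag : ∀ σ : {σ // σ ∈ C}, A σ σ =
      -(1 / (k + 1 : ℝ)) * (LP σ.1 : ℝ) *
        ∑ ρ ∈ K.filter (fun ρ => ρ ⊆ σ.1 ∧ ρ.card = k), ((LP ρ : ℝ))⁻¹)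
    (hAadj : ∀ σ σ' : {σ // σ ∈ C}, σ.1 ≠ σ'.1 → (σ.1 ∩ σ'.1).card = k →
      A σ σ' = -(1 / (k + 1 : ℝ)) *
        ((ε0 σ.1 * IncSgn σ.1 (σ.1 ∩ σ'.1) * ε0 σ'.1 * IncSgn σ'.1 (σ.1 ∩ σ'.1) : ℤ) : ℝ) *
        Real.sqrt (LP σ.1 : ℝ) * Real.sqrt (LP σ'.1 : ℝ) / (LP (σ.1 ∩ σ'.1) : ℝ))
    (hAzero : ∀ σ σ' : {σ // σ ∈ C}, σ.1 ≠ σ'.1 → (σ.1 ∩ σ'.1).card ≠ k → A σ σ' = 0) :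
    (A + 1).PosSemidef ∧
    ((∃ f : {σ // σ ∈ C} → ℝ, f ≠ 0 ∧ A.mulVec f = -f) ↔
      (∃ ε : Finset α → ℤ, (∀ σ ∈ C, ε σ = 1 ∨ ε σ = -1) ∧
        ∀ σ ∈ C, ∀ σ' ∈ C, σ ≠ σ' → (σ ∩ σ').card = k →
          ε σ * IncSgn σ (σ ∩ σ') = ε σ' * IncSgn σ' (σ ∩ σ'))) ∧
    ((∀ σ ∈ C, ∀ σ' ∈ C, σ ≠ σ' → (σ ∩ σ').card = k →
        ε0 σ * IncSgn σ (σ ∩ σ') = ε0 σ' * IncSgn σ' (σ ∩ σ')) →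
      (A.mulVec (fun σ => Real.sqrt ((LP σ.1 * (k + 1).factorial : ℕ) : ℝ))
          = -(fun σ => Real.sqrt ((LP σ.1 * (k + 1).factorial : ℕ) : ℝ)) ∧
        ∀ f f' : {σ // σ ∈ C} → ℝ, A.mulVec f = -f → A.mulVec f' = -f' → f' ≠ 0 →
          ∃ c : ℝ, f = c • f')) := by
  have hC : (C : Set (Finset α)).Sized (k + 1) := fun σ hσ => (hCK σ hσ).2
  have hε0C : ∀ σ ∈ C, ε0 σ = 1 ∨ ε0 σ = -1 := fun σ hσ => hε0 σ (hCK σ hσ).1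
  have hLP : ∀ σ ∈ C, 0 < LP σ := fun σ hσ => leafPath_pos hKdc hLPfacet hLPrec (hCK σ hσ).1
  have hA := eq_neg_smul_projSum_weightedIncidence hKdc hk hCK hε0C
    (fun ρ => leafPath_eq_sum_of_mem_shadow hKdc hk hLPrec hCK
      fun σ hσ τ hτ => hCconn.mem_of_card_inter hCK hCmax hσ hτ) hAdiag hAadj hAzero
  have hdeg := card_filter_weightedIncidence_ne_zero hC hε0C hLP
  have hconn := reflTransGen_weightedIncidence hC hCconn hε0C hLP
  have hker := mulVec_eq_neg_iff_of_eq_projSum _ _ hA k.succ_ne_zero hdeg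
  refine ⟨posSemidef_add_one_of_eq_projSum _ _ hA k.succ_ne_zero hdeg, ⟨?_, ?_⟩, fun hcoh => ⟨?_,
    fun f f' => exists_eq_smul_of_mulVec_eq_neg _ _ hA k.succ_ne_zero hdeg hconn⟩⟩
  · rintro ⟨f, hf0, hf⟩
    exact exists_isCoherent_of_isLocallyProportional hC hε0C hLP
      (fun σ hσ => hf0 (((hker f).1 hf).eq_zero_of_apply_eq_zero hconn hσ)) ((hker f).1 hf)
  · rintro ⟨ε, hε, hcoh⟩
    obtain ⟨σ, hσ⟩ := card_pos.1 (by omega : 0 < #C)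
    refine ⟨_, Function.ne_iff.2 ⟨⟨σ, hσ⟩, ?_⟩,
      (hker _).2 (isLocallyProportional_of_isCoherent hC hcoh)⟩
    rcases hε0C σ hσ with h | h <;> rcases hε σ hσ with h' | h' <;> simp [h, h', (hLP σ hσ).ne']
  · have hg : (fun σ : {σ // σ ∈ C} => √((LP σ.1 * (k + 1).factorial : ℕ) : ℝ)) =
        √((k + 1).factorial : ℝ) • fun σ => ((ε0 σ.1 * ε0 σ.1 : ℤ) : ℝ) * √(LP σ.1 : ℝ) := by
      funext σ
      rcases hε0C σ.1 σ.2 with h | h <;> simp [h, mul_comm]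
    rw [hg, mulVec_smul, (hker _).2 (isLocallyProportional_of_isCoherent hC hcoh), smul_neg]

/-- For the signed down-operator `A = A_k^{O(C_k),down}` of a down-connected
component `C` of `k`-faces (`k ≥ 1`, at least two faces) of a finite simplicial
complex, with entries built from the leaf-path function `LP`, the incidence
signs of a fixed orientation `ε₀`, and `RP = (k+1)!` on `k`-faces:
`λ_min(A) ≥ −1` (i.e. `A + I` is positive semidefinite); `−1` is an eigenvalue
iff `C` admits a coherent orientation; and if the chosen orientation `ε₀` is
itself coherent then `g(σ) = (LP(σ)·RP(σ))^{1/2} = (LP(σ)·(k+1)!)^{1/2}` is an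
eigenvector for `−1`, of multiplicity one. -/
theorem stmt16 {α : Type} [LinearOrder α] [Fintype α]
    (K : Finset (Finset α))
    (hKne : ∀ σ ∈ K, σ.Nonempty)
    (hKdc : ∀ σ ∈ K, ∀ τ, τ ⊆ σ → τ.Nonempty → τ ∈ K)
    (k : ℕ) (hk : 1 ≤ k)
    (LP : Finset α → ℕ)
    (hLPfacet : ∀ σ ∈ K, (∀ τ ∈ K, σ ⊆ τ → σ = τ) → LP σ = 1)
    (hLPrec : ∀ σ ∈ K, ¬ (∀ τ ∈ K, σ ⊆ τ → σ = τ) →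
      LP σ = ∑ τ ∈ K.filter (fun τ => σ ⊆ τ ∧ τ.card = σ.card + 1), LP τ)
    (C : Finset (Finset α))
    (hCK : ∀ σ ∈ C, σ ∈ K ∧ σ.card = k + 1)
    (hCconn : DownConnected k C)
    (hCmax : ∀ T : Finset (Finset α), C ⊆ T →
      (∀ σ ∈ T, σ ∈ K ∧ σ.card = k + 1) → DownConnected k T → T = C)
    (hCcard : 2 ≤ C.card)
    (ε0 : Finset α → ℤ)
    (hε0 : ∀ σ ∈ K, ε0 σ = 1 ∨ ε0 σ = -1)
    (A : Matrix {σ // σ ∈ C} {σ // σ ∈ C} ℝ)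
    (hAdiag : ∀ σ : {σ // σ ∈ C}, A σ σ =
      -(1 / (k + 1 : ℝ)) * (LP σ.1 : ℝ) *
        ∑ ρ ∈ K.filter (fun ρ => ρ ⊆ σ.1 ∧ ρ.card = k), ((LP ρ : ℝ))⁻¹)
    (hAadj : ∀ σ σ' : {σ // σ ∈ C}, σ.1 ≠ σ'.1 → (σ.1 ∩ σ'.1).card = k →
      A σ σ' = -(1 / (k + 1 : ℝ)) *
        ((ε0 σ.1 * IncSgn σ.1 (σ.1 ∩ σ'.1) * ε0 σ'.1 * IncSgn σ'.1 (σ.1 ∩ σ'.1) : ℤ) : ℝ) *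
        Real.sqrt (LP σ.1 : ℝ) * Real.sqrt (LP σ'.1 : ℝ) / (LP (σ.1 ∩ σ'.1) : ℝ))
    (hAzero : ∀ σ σ' : {σ // σ ∈ C}, σ.1 ≠ σ'.1 → (σ.1 ∩ σ'.1).card ≠ k → A σ σ' = 0) :
    (A + 1).PosSemidef ∧
    ((∃ f : {σ // σ ∈ C} → ℝ, f ≠ 0 ∧ A.mulVec f = -f) ↔
      (∃ ε : Finset α → ℤ, (∀ σ ∈ C, ε σ = 1 ∨ ε σ = -1) ∧
        ∀ σ ∈ C, ∀ σ' ∈ C, σ ≠ σ' → (σ ∩ σ').card = k →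
          ε σ * IncSgn σ (σ ∩ σ') = ε σ' * IncSgn σ' (σ ∩ σ'))) ∧
    ((∀ σ ∈ C, ∀ σ' ∈ C, σ ≠ σ' → (σ ∩ σ').card = k →
        ε0 σ * IncSgn σ (σ ∩ σ') = ε0 σ' * IncSgn σ' (σ ∩ σ')) →
      (A.mulVec (fun σ => Real.sqrt ((LP σ.1 * (k + 1).factorial : ℕ) : ℝ))
          = -(fun σ => Real.sqrt ((LP σ.1 * (k + 1).factorial : ℕ) : ℝ)) ∧
        ∀ f f' : {σ // σ ∈ C} → ℝ, A.mulVec f = -f → A.mulVec f' = -f' → f' ≠ 0 →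
          ∃ c : ℝ, f = c • f')) :=
  stmt16_general K hKdc k hk LP hLPfacet hLPrec C hCK hCconn hCmax hCcard ε0 hε0 A hAdiag hAadj
    hAzero
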